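/- arXiv:1308.6339 — 3 statements merged into one kernel-verified Lean document; each statement's English description precedes it below -/
import Mathlib

section
/- Let W be a real random variable such that E[exp(λW²)] ≤ (1 − 4ηλ)^{−1/2} for all 0 < λ < 1/(4η), where 0 < η ≤ 1/2. Define φ(λ) = log E[exp(λ(W² − 1))]. Then for all 0 < λ < 1/(4η), φ(λ) ≤ 8η²λ²/(1 − 4ηλ). -/
/-!
Factoring out `exp (-λ)` gives `φ(λ) ≤ -½ log (1 - u) - λ` with `u = 4ηλ`, and
`-log (1 - u) ≤ u / (1 - u)` bounds this by `8η²λ²/(1 - u) - λ(1 - 2η)`.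
-/

open MeasureTheory ProbabilityTheory Real

lemma neg_log_one_sub_le_div {u : ℝ} (hu : u < 1) : -log (1 - u) ≤ u / (1 - u) := by
  have hne : 1 - u ≠ 0 := (sub_pos.2 hu).ne'
  have h := one_sub_inv_le_log_of_pos (sub_pos.2 hu)
  have : 1 - (1 - u)⁻¹ = -(u / (1 - u)) := by field_simp; ring
  linarith

lemma neg_half_log_one_sub_sub_le {η l : ℝ} (hη : η ≤ 1 / 2) (hl : 0 ≤ l) (hu : 4 * η * l < 1) :
    -(1 / 2) * log (1 - 4 * η * l) - l ≤ 8 * η ^ 2 * l ^ 2 / (1 - 4 * η * l) := by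
  have hne : 1 - 4 * η * l ≠ 0 := (sub_pos.2 hu).ne'
  have gap : 8 * η ^ 2 * l ^ 2 / (1 - 4 * η * l) - (1 / 2 * (4 * η * l / (1 - 4 * η * l)) - l)
      = l * (1 - 2 * η) := by
    linear_combination (-2 * η * l) * mul_inv_cancel₀ hne
  linarith [neg_log_one_sub_le_div hu, mul_nonneg hl (by linarith : (0 : ℝ) ≤ 1 - 2 * η)]

lemma mgf_sub_const {Ω : Type*} [MeasurableSpace Ω] (μ : Measure Ω) (X : Ω → ℝ) (c t : ℝ) :
    mgf (fun ω => X ω - c) μ t = mgf X μ t * exp (-(t * c)) := by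
  simp_rw [sub_eq_add_neg]
  exact (mgf_add_const (-c)).trans (by rw [mul_neg])

theorem log_mgf_shifted_bound_general {Ω : Type*} [MeasurableSpace Ω]
    (μ : Measure Ω) (W : Ω → ℝ)
    (η : ℝ) (hη0 : 0 < η) (hη : η ≤ 1/2)
    (hW : ∀ l : ℝ, 0 < l → l < 1/(4*η) →
      ∫ ω, Real.exp (l * W ω ^ 2) ∂μ ≤ (1 - 4*η*l) ^ (-(1/2) : ℝ)) :
    ∀ l : ℝ, 0 < l → l < 1/(4*η) →
      Real.log (∫ ω, Real.exp (l * (W ω ^ 2 - 1)) ∂μ) ≤ 8*η^2*l^2 / (1 - 4*η*l) := by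
  intro l hl hl'
  have hu : 4 * η * l < 1 := by
    have := (lt_div_iff₀ (by positivity)).1 hl'
    linarith
  have hmgf : mgf (fun ω => W ω ^ 2) μ l ≤ (1 - 4 * η * l) ^ (-(1 / 2) : ℝ) := hW l hl hl'
  change log (mgf (fun ω => W ω ^ 2 - 1) μ l) ≤ _
  rw [mgf_sub_const, mul_one]
  -- `mgf = 0` is the junk value of a non-integrable `exp (l W²)`
  rcases mgf_nonneg.eq_or_lt with h0 | hpos
  · rw [← h0, zero_mul, log_zero]
    have : 0 < 1 - 4 * η * l := by linarith
    positivity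
  calc log (mgf (fun ω => W ω ^ 2) μ l * exp (-l))
      = log (mgf (fun ω => W ω ^ 2) μ l) - l := by
        rw [log_mul hpos.ne' (exp_pos _).ne', log_exp, sub_eq_add_neg]
    _ ≤ log ((1 - 4 * η * l) ^ (-(1 / 2) : ℝ)) - l := by gcongr
    _ = -(1 / 2) * log (1 - 4 * η * l) - l := by rw [log_rpow (by linarith)]
    _ ≤ 8 * η ^ 2 * l ^ 2 / (1 - 4 * η * l) := neg_half_log_one_sub_sub_le hη hl.le hu

/-- If `E[exp (λ W²)] ≤ (1 − 4ηλ)^{−1/2}` for all `0 < λ < 1/(4η)` with `0 < η ≤ 1/2`,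
then `φ(λ) = log E[exp (λ(W² − 1))]` satisfies `φ(λ) ≤ 8η²λ²/(1 − 4ηλ)` on this range. -/
theorem log_mgf_shifted_bound {Ω : Type*} [MeasurableSpace Ω]
    (μ : Measure Ω) [IsProbabilityMeasure μ] (W : Ω → ℝ)
    (η : ℝ) (hη0 : 0 < η) (hη : η ≤ 1/2)
    (hW : ∀ l : ℝ, 0 < l → l < 1/(4*η) →
      ∫ ω, Real.exp (l * W ω ^ 2) ∂μ ≤ (1 - 4*η*l) ^ (-(1/2) : ℝ)) :
    ∀ l : ℝ, 0 < l → l < 1/(4*η) →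
      Real.log (∫ ω, Real.exp (l * (W ω ^ 2 - 1)) ∂μ) ≤ 8*η^2*l^2 / (1 - 4*η*l) :=
  log_mgf_shifted_bound_general μ W η hη0 hη hW
end

section
/- Let W satisfy E[exp(λW²)] ≤ (1 − 4ηλ)^{−1/2} for 0 < λ < 1/(4η) with (1/2)(1−β²)/(1+β²) ≤ η ≤ 1/2 and β = 2ηλ < 1/2. Define ψ(λ) = log E[exp(λ(1 − W²))]. Then ψ(λ) ≤ 8η²λ²/(1 − 4ηλ) at λ = β/(2η). -/
/-!
Since `exp (λ (1 - W²)) = exp λ · exp (-λ W²)`, the hypothesis at the negative parameter `-λ`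
gives `ψ(λ) ≤ λ - log (1 + 4ηλ) / 2 = β/(2η) - log (1 + 2β) / 2`. The lower bound on `η` gives
`β/(2η) ≤ β (1 + β²)/(1 - β²)`, and `log (1 + 2β) ≥ 2β/(1 + 2β)`; what remains is a rational
inequality in `β` for `0 < β < 1/2`.
-/

open MeasureTheory

lemma integral_exp_const_add {Ω : Type*} [MeasurableSpace Ω] (μ : Measure Ω) (c : ℝ)
    (f : Ω → ℝ) :
    ∫ ω, Real.exp (c + f ω) ∂μ = Real.exp c * ∫ ω, Real.exp (f ω) ∂μ := by
  simp only [Real.exp_add, integral_const_mul]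

/-- The `max` with `0` accounts for the junk value `log 0 = 0` of a vanishing integral. -/
lemma log_integral_exp_const_add_le {Ω : Type*} [MeasurableSpace Ω] {μ : Measure Ω}
    {c B : ℝ} {f : Ω → ℝ} (hB : ∫ ω, Real.exp (f ω) ∂μ ≤ B) :
    Real.log (∫ ω, Real.exp (c + f ω) ∂μ) ≤ max 0 (c + Real.log B) := by
  rw [integral_exp_const_add]
  have hI : 0 ≤ ∫ ω, Real.exp (f ω) ∂μ := integral_nonneg fun ω => (Real.exp_pos (f ω)).le
  rcases hI.eq_or_lt with h0 | hpos
  · simp [← h0]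
  · rw [Real.log_mul (Real.exp_pos c).ne' hpos.ne', Real.log_exp]
    exact le_max_of_le_right (add_le_add_right (Real.log_le_log hpos hB) c)

lemma mul_one_add_sq_div_one_sub_sq_le {β : ℝ} (hβ0 : 0 ≤ β) (hβ : β < 1 / 2) :
    β * (1 + β ^ 2) / (1 - β ^ 2) ≤ β / (1 + 2 * β) + 2 * β ^ 2 / (1 - 2 * β) := by
  have h2 : 0 < 1 + 2 * β := by linarith
  have h3 : 0 < 1 - 2 * β := by linarith
  rw [div_add_div _ _ h2.ne' h3.ne', div_le_div_iff₀ (by nlinarith) (by positivity)]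
  nlinarith [pow_nonneg hβ0 3, pow_nonneg hβ0 4]

lemma div_two_mul_sub_half_log_le {β η : ℝ} (hβ0 : 0 < β) (hβ : β < 1 / 2)
    (hη : (1 / 2) * ((1 - β ^ 2) / (1 + β ^ 2)) ≤ η) :
    β / (2 * η) - (1 / 2) * Real.log (1 + 2 * β) ≤ 2 * β ^ 2 / (1 - 2 * β) := by
  have hd0 : 0 < (1 - β ^ 2) / (1 + β ^ 2) := div_pos (by nlinarith) (by positivity)
  have hη_bound : β / (2 * η) ≤ β * (1 + β ^ 2) / (1 - β ^ 2) :=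
    calc β / (2 * η) ≤ β / ((1 - β ^ 2) / (1 + β ^ 2)) :=
          div_le_div_of_nonneg_left hβ0.le hd0 (by linarith)
      _ = β * (1 + β ^ 2) / (1 - β ^ 2) := div_div_eq_mul_div _ _ _
  have hlog : 2 * β / (1 + 2 * β) ≤ Real.log (1 + 2 * β) := by
    have h := Real.one_sub_inv_le_log_of_pos (x := 1 + 2 * β) (by linarith)
    rwa [inv_eq_one_div, one_sub_div (by linarith), add_sub_cancel_left] at h
  have hpoly := mul_one_add_sq_div_one_sub_sq_le hβ0.le hβ
  have hhalf : 2 * β / (1 + 2 * β) = 2 * (β / (1 + 2 * β)) := mul_div_assoc _ _ _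
  linarith

theorem log_mgf_lower_tail_bound_general {Ω : Type*} [MeasurableSpace Ω]
    (μ : Measure Ω) (W : Ω → ℝ)
    (η β : ℝ) (hβ0 : 0 < β) (hβ : β < 1/2)
    (hη1 : (1/2) * ((1 - β^2) / (1 + β^2)) ≤ η)
    (hW : ∀ l : ℝ, l < 1/(4*η) →
      ∫ ω, Real.exp (l * W ω ^ 2) ∂μ ≤ (1 - 4*η*l) ^ (-(1/2) : ℝ)) :
    Real.log (∫ ω, Real.exp ((β/(2*η)) * (1 - W ω ^ 2)) ∂μ)
      ≤ 8*η^2*(β/(2*η))^2 / (1 - 4*η*(β/(2*η))) := by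
  have hη0 : 0 < η := by
    have : 0 < 1 - β ^ 2 := by nlinarith
    exact lt_of_lt_of_le (by positivity) hη1
  set l := β / (2 * η) with hl
  have hl0 : 0 < l := by positivity
  have h4ηl : 4 * η * l = 2 * β := by rw [hl]; field_simp; ring
  have hmgf := hW (-l) (lt_trans (neg_neg_of_pos hl0) (by positivity))
  rw [show 1 - 4 * η * -l = 1 + 2 * β by linarith] at hmgf
  calc Real.log (∫ ω, Real.exp (l * (1 - W ω ^ 2)) ∂μ)
      = Real.log (∫ ω, Real.exp (l + -l * W ω ^ 2) ∂μ) := by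
        simp_rw [mul_one_sub, sub_eq_add_neg, neg_mul]
    _ ≤ max 0 (l + Real.log ((1 + 2 * β) ^ (-(1 / 2) : ℝ))) := log_integral_exp_const_add_le hmgf
    _ ≤ 2 * β ^ 2 / (1 - 2 * β) := by
        refine max_le (div_nonneg (by positivity) (by linarith)) ?_
        rw [Real.log_rpow (by linarith), neg_mul, ← sub_eq_add_neg]
        exact div_two_mul_sub_half_log_le hβ0 hβ hη1
    _ = 8 * η ^ 2 * l ^ 2 / (1 - 4 * η * l) := by
        rw [h4ηl, hl]; field_simp; ring

/-- Lower-tail log-MGF bound: if `E[exp (λ W²)] ≤ (1 − 4ηλ)^{−1/2}` for `λ < 1/(4η)`,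
with `(1/2)(1−β²)/(1+β²) ≤ η ≤ 1/2` and `β = 2ηλ < 1/2`, then
`ψ(λ) = log E[exp (λ(1 − W²))] ≤ 8η²λ²/(1 − 4ηλ)` at `λ = β/(2η)`. -/
theorem log_mgf_lower_tail_bound {Ω : Type*} [MeasurableSpace Ω]
    (μ : Measure Ω) [IsProbabilityMeasure μ] (W : Ω → ℝ)
    (η β : ℝ) (hβ0 : 0 < β) (hβ : β < 1/2)
    (hη1 : (1/2) * ((1 - β^2) / (1 + β^2)) ≤ η) (hη2 : η ≤ 1/2)
    (hW : ∀ l : ℝ, l < 1/(4*η) →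
      ∫ ω, Real.exp (l * W ω ^ 2) ∂μ ≤ (1 - 4*η*l) ^ (-(1/2) : ℝ)) :
    Real.log (∫ ω, Real.exp ((β/(2*η)) * (1 - W ω ^ 2)) ∂μ)
      ≤ 8*η^2*(β/(2*η))^2 / (1 - 4*η*(β/(2*η))) :=
  log_mgf_lower_tail_bound_general μ W η β hβ0 hβ hη1 hW
end

section
/- For the matrices B_i = x_i·S P^i C (x a unit vector in ℝ^d), the quantity σ² := max{‖Σ_i B_i B_iᵀ‖, ‖Σ_i B_iᵀ B_i‖} equals 1, where ‖·‖ denotes the operator (spectral) norm. -/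
/-!
Each `B i` is `x i` times the coisometry `A i = S P^i C`: `P` and `C` are permutation matrices,
hence orthogonal, and `S` has orthonormal rows, so `A i A iᵀ = 1`. Therefore
`Σ B i B iᵀ = (Σ x i²) 1 = 1`, of norm `1` since `k ≥ 1`, while the C*-identity gives
`‖A iᵀ A i‖ = ‖A i A iᵀ‖ = 1`, so the triangle inequality bounds `‖Σ B iᵀ B i‖` by `Σ x i² = 1`.
-/

open Matrix
open scoped Matrix.Norms.L2Operator

theorem Matrix.permMatrix_mem_unitary {n R : Type*} [Fintype n] [DecidableEq n] [CommRing R]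
    [StarRing R] (σ : Equiv.Perm n) : σ.permMatrix R ∈ unitary (Matrix n n R) := by
  rw [Unitary.mem_iff, star_eq_conjTranspose, conjTranspose_permMatrix, ← permMatrix_mul,
    ← permMatrix_mul]
  simp

theorem Matrix.submatrix_one_mul_transpose {m n R : Type*} [Fintype n] [DecidableEq m]
    [DecidableEq n] [NonAssocSemiring R] {f : m → n} (hf : Function.Injective f) :
    (1 : Matrix n n R).submatrix f id * ((1 : Matrix n n R).submatrix f id)ᵀ = 1 := by
  rw [transpose_submatrix, transpose_one, ← submatrix_mul _ _ _ _ _ Function.bijective_id,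
    Matrix.mul_one, submatrix_one _ hf]

theorem Matrix.mul_mul_transpose_eq_one_of_mem_unitary {m n : Type*} [Fintype n]
    [DecidableEq m] [DecidableEq n] {S : Matrix m n ℝ} (hS : S * Sᵀ = 1) {U : Matrix n n ℝ}
    (hU : U ∈ unitary (Matrix n n ℝ)) : S * U * (S * U)ᵀ = 1 := by
  rw [transpose_mul, Matrix.mul_assoc, ← Matrix.mul_assoc U,
    ← conjTranspose_eq_transpose_of_trivial U, ← star_eq_conjTranspose,
    Unitary.mul_star_self_of_mem hU, Matrix.one_mul, hS]

theorem Matrix.l2_opNorm_transpose_mul_self_le_one {m n : Type*} [Fintype m] [Fintype n]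
    [DecidableEq m] [DecidableEq n] {A : Matrix m n ℝ} (hA : A * Aᵀ = 1) : ‖Aᵀ * A‖ ≤ 1 :=
  calc ‖Aᵀ * A‖ = ‖Aᴴ‖ * ‖Aᴴ‖ := by
        rw [← conjTranspose_eq_transpose_of_trivial, l2_opNorm_conjTranspose_mul_self,
          l2_opNorm_conjTranspose]
    _ = ‖A * Aᵀ‖ := by
        rw [← l2_opNorm_conjTranspose_mul_self, conjTranspose_conjTranspose,
          conjTranspose_eq_transpose_of_trivial]
    _ ≤ 1 := by
        rw [hA, ← l2_opNorm_toEuclideanCLM, map_one]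
        exact ContinuousLinearMap.norm_id_le

theorem max_norm_sum_eq_one_of_mul_transpose_eq_one {ι m n : Type*} [Fintype ι] [Fintype m]
    [Fintype n] [DecidableEq m] [DecidableEq n] [Nonempty m] (x : ι → ℝ) (hx : ∑ i, x i ^ 2 = 1)
    (A : ι → Matrix m n ℝ) (hA : ∀ i, A i * (A i)ᵀ = 1) :
    max ‖toEuclideanCLM (𝕜 := ℝ) (∑ i, (x i • A i) * (x i • A i)ᵀ)‖
        ‖toEuclideanCLM (𝕜 := ℝ) (∑ i, (x i • A i)ᵀ * (x i • A i))‖ = 1 := by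
  simp_rw [transpose_smul, Matrix.smul_mul, Matrix.mul_smul, smul_smul, ← sq, hA,
    ← Finset.sum_smul, hx, one_smul, map_one, norm_one, l2_opNorm_toEuclideanCLM]
  refine max_eq_left ?_
  calc ‖∑ i, x i ^ 2 • ((A i)ᵀ * A i)‖
      ≤ ∑ i, ‖x i ^ 2 • ((A i)ᵀ * A i)‖ := norm_sum_le _ _
    _ ≤ ∑ i, x i ^ 2 := by
        gcongr with i
        rw [norm_smul, Real.norm_of_nonneg (sq_nonneg _)]
        exact mul_le_of_le_one_right (sq_nonneg _) (l2_opNorm_transpose_mul_self_le_one (hA i))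
    _ = 1 := hx

theorem eq_permMatrix_subRight_one {R : Type*} [Zero R] [One R] {d : ℕ} [NeZero d]
    {P : Matrix (Fin d) (Fin d) R}
    (hP : ∀ i j, P i j = if (i : ℕ) = ((j : ℕ) + 1) % d then 1 else 0) :
    P = Equiv.Perm.permMatrix R (Equiv.subRight (1 : Fin d)) := by
  ext i j
  have : (i : ℕ) = ((j : ℕ) + 1) % d ↔ i - 1 = j := by
    rw [sub_eq_iff_eq_add, Fin.ext_iff, Fin.val_add, Fin.val_one', Nat.add_mod_mod]
  simp [hP, this]

theorem eq_permMatrix_neg {R : Type*} [Zero R] [One R] {d : ℕ} [NeZero d]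
    {C : Matrix (Fin d) (Fin d) R}
    (hC : ∀ i j, C i j = if (j : ℕ) = (d - (i : ℕ)) % d then 1 else 0) :
    C = (Equiv.neg (Fin d)).permMatrix R := by
  ext i j
  simp [hC, Fin.ext_iff, Fin.neg_def, eq_comm]

theorem eq_submatrix_one_castLE {R : Type*} [Zero R] [One R] {k d : ℕ} (hkd : k ≤ d)
    {S : Matrix (Fin k) (Fin d) R} (hS : ∀ r j, S r j = if (r : ℕ) = (j : ℕ) then 1 else 0) :
    S = (1 : Matrix (Fin d) (Fin d) R).submatrix (Fin.castLE hkd) id := by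
  ext r j
  simp [hS, one_apply, Fin.ext_iff]

/-- For `B i = x i • S P^i C` with `x` a unit vector, the variance parameter
`σ² = max{‖Σ B_i B_iᵀ‖, ‖Σ B_iᵀ B_i‖}` (operator norms) equals `1`. -/
theorem sigma_sq_eq_one (d k : ℕ) (hk : 0 < k) (hkd : k ≤ d)
    (x : Fin d → ℝ) (hx : ∑ i, x i ^ 2 = 1)
    (S : Matrix (Fin k) (Fin d) ℝ)
    (hS : ∀ r j, S r j = if (r : ℕ) = (j : ℕ) then 1 else 0)
    (P C : Matrix (Fin d) (Fin d) ℝ)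
    (hP : ∀ i j, P i j = if (i : ℕ) = ((j : ℕ) + 1) % d then 1 else 0)
    (hC : ∀ i j, C i j = if (j : ℕ) = (d - (i : ℕ)) % d then 1 else 0)
    (B : Fin d → Matrix (Fin k) (Fin d) ℝ)
    (hB : ∀ i : Fin d, B i = x i • (S * P ^ (i : ℕ) * C)) :
    max ‖Matrix.toEuclideanCLM (𝕜 := ℝ) (∑ i, B i * (B i)ᵀ)‖
        ‖Matrix.toEuclideanCLM (𝕜 := ℝ) (∑ i, (B i)ᵀ * B i)‖ = 1 := by
  have : NeZero d := ⟨(hk.trans_le hkd).ne'⟩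
  have : Nonempty (Fin k) := ⟨⟨0, hk⟩⟩
  have hSS : S * Sᵀ = 1 := by
    rw [eq_submatrix_one_castLE hkd hS]
    exact submatrix_one_mul_transpose (Fin.castLE_injective hkd)
  have hPu : P ∈ unitary (Matrix (Fin d) (Fin d) ℝ) := by
    rw [eq_permMatrix_subRight_one hP]; exact permMatrix_mem_unitary _
  have hCu : C ∈ unitary (Matrix (Fin d) (Fin d) ℝ) := by
    rw [eq_permMatrix_neg hC]; exact permMatrix_mem_unitary _
  have hA : ∀ i : Fin d, S * P ^ (i : ℕ) * C * (S * P ^ (i : ℕ) * C)ᵀ = 1 := fun i => by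
    rw [Matrix.mul_assoc S]
    exact mul_mul_transpose_eq_one_of_mem_unitary hSS (mul_mem (pow_mem hPu _) hCu)
  obtain rfl : B = fun i => x i • (S * P ^ (i : ℕ) * C) := funext hB
  exact max_norm_sum_eq_one_of_mul_transpose_eq_one x hx _ hA
end
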